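/- Let H be an abelian ℓ-group with a strong unit v such that for every x ∈ H every element g ∈ H can be written g = a + b with a ∈ x^⊥⊥ and b ∈ x^⊥ (as holds in every projectable Archimedean ℓ-group). Then for every h ∈ H there exists a unique component σ of v satisfying σ^⊥⊥ = h^⊥⊥. -/

import Mathlib

/-- The absolute value `|g| = (g ⊔ 0) + ((-g) ⊔ 0)` in a lattice-ordered abelian group. -/
def absl {A : Type*} [Lattice A] [AddCommGroup A] (g : A) : A :=
  (g ⊔ 0) + (-g ⊔ 0)

/-- The polar `T^⊥ = {x : |x| ⊓ |t| = 0 for all t ∈ T}`. -/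
def polar {A : Type*} [Lattice A] [AddCommGroup A] (T : Set A) : Set A :=
  {x : A | ∀ t ∈ T, absl x ⊓ absl t = 0}

/-- A component of `u`: an element `χ` with `χ ⊓ (u - χ) = 0` and `χ ⊔ (u - χ) = u`. -/
def IsComponent {A : Type*} [Lattice A] [AddCommGroup A] (u χ : A) : Prop :=
  χ ⊓ (u - χ) = 0 ∧ χ ⊔ (u - χ) = u

/-!
Decompose `v = a + b` along `h^⊥⊥ ⊕ h^⊥`. Disjointness of the summands together with `0 ≤ v`
forces `a, b ≥ 0` and `a ⊓ b = 0`, so `a` is a component of `v`. Since `v` is a strong unit,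
anything disjoint from both `a` and `b` is disjoint from every multiple of `v`, hence from `h`;
thus `a^⊥ = h^⊥`. Uniqueness: if `σ` lies in the bipolar of a component `τ`, then `σ` is
disjoint from `v - τ`, which squeezes `σ` below `τ`.
-/

section Lattice

variable {A : Type*} [Lattice A] [AddCommGroup A]

lemma mem_polar_polar_self (a : A) : a ∈ polar (polar {a}) := by
  intro t ht
  rw [inf_comm]
  exact ht a rfl

lemma subset_polar_singleton_of_mem_polar {a : A} {S : Set A} (ha : a ∈ polar S) :
    S ⊆ polar {a} := by
  rintro y hy _ rfl
  rw [inf_comm]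
  exact ha y hy

lemma IsComponent.nonneg {u σ : A} (hσ : IsComponent u σ) : 0 ≤ σ :=
  hσ.1 ▸ inf_le_left

lemma IsComponent.sub_nonneg {u σ : A} (hσ : IsComponent u σ) : 0 ≤ u - σ :=
  hσ.1 ▸ inf_le_right

end Lattice

section LatticeOrderedGroup

variable {A : Type*} [Lattice A] [AddCommGroup A] [AddLeftMono A]

lemma absl_eq_abs (a : A) : absl a = |a| :=
  posPart_add_negPart a

lemma mem_polar_singleton {x t : A} : x ∈ polar {t} ↔ |x| ⊓ |t| = 0 := by
  simp [polar, absl_eq_abs]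

lemma abs_inf_abs_eq_zero_of_mem_polar {x t : A} {T : Set A} (hx : x ∈ polar T) (ht : t ∈ T) :
    |x| ⊓ |t| = 0 := by
  simpa [absl_eq_abs] using hx t ht

lemma inf_add_le_inf_add_inf {x c d : A} (hx : 0 ≤ x) (hc : 0 ≤ c) (hd : 0 ≤ d) :
    x ⊓ (c + d) ≤ x ⊓ c + x ⊓ d := by
  rw [inf_add, add_inf, add_inf]
  refine le_inf (le_inf ?_ ?_) (le_inf ?_ inf_le_right) <;> refine inf_le_left.trans ?_
  · exact le_add_of_nonneg_right hx
  · exact le_add_of_nonneg_right hd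
  · exact le_add_of_nonneg_left hc

lemma inf_add_eq_zero {x c d : A} (hx : 0 ≤ x) (hc : 0 ≤ c) (hd : 0 ≤ d)
    (hxc : x ⊓ c = 0) (hxd : x ⊓ d = 0) : x ⊓ (c + d) = 0 :=
  le_antisymm (by simpa [hxc, hxd] using inf_add_le_inf_add_inf hx hc hd)
    (le_inf hx (add_nonneg hc hd))

lemma inf_nsmul_eq_zero {x c : A} (hx : 0 ≤ x) (hc : 0 ≤ c) (hxc : x ⊓ c = 0) (n : ℕ) :
    x ⊓ n • c = 0 := by
  induction n with
  | zero => simpa using hx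
  | succ k ih => rw [succ_nsmul]; exact inf_add_eq_zero hx (nsmul_nonneg hc k) hc ih hxc

lemma eq_zero_of_inf_eq_zero_of_le_nsmul {x u : A} {n : ℕ} (hx : 0 ≤ x) (hu : 0 ≤ u)
    (hxu : x ⊓ u = 0) (hle : x ≤ n • u) : x = 0 := by
  rw [← inf_eq_left.mpr hle]
  exact inf_nsmul_eq_zero hx hu hxu n

lemma nonneg_of_abs_inf_abs_eq_zero {a b : A} (hab : |a| ⊓ |b| = 0) (h : 0 ≤ a + b) :
    0 ≤ a := by
  have hneg : -a ≤ b := by simpa using add_le_add_left h (-a)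
  have ha : a⁻ ≤ |a| := sup_le (neg_le_abs a) (abs_nonneg a)
  have hb : a⁻ ≤ |b| := sup_le (hneg.trans (le_abs_self b)) (abs_nonneg b)
  exact negPart_nonpos.mp (hab ▸ le_inf ha hb)

lemma isComponent_add_of_inf_eq_zero {a b : A} (hab : a ⊓ b = 0) : IsComponent (a + b) a := by
  refine ⟨by simpa using hab, ?_⟩
  rw [add_sub_cancel_left, ← inf_add_sup a b, hab, zero_add]

lemma polar_singleton_subset_of_add_mem_polar {a b h : A}
    (hunit : ∀ g : A, ∃ n : ℕ, g ≤ n • (a + b)) (ha : 0 ≤ a) (hb : 0 ≤ b)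
    (hbh : b ∈ polar {h}) : polar {a} ⊆ polar {h} := by
  intro y hy
  rw [mem_polar_singleton] at hy hbh ⊢
  rw [abs_of_nonneg ha] at hy
  rw [abs_of_nonneg hb] at hbh
  set x := |y| ⊓ |h|
  have hx : 0 ≤ x := le_inf (abs_nonneg y) (abs_nonneg h)
  have hxa : x ⊓ a = 0 :=
    le_antisymm (hy ▸ inf_le_inf_right a inf_le_left) (le_inf hx ha)
  have hxb : x ⊓ b = 0 :=
    le_antisymm (hbh ▸ inf_comm b |h| ▸ inf_le_inf_right b inf_le_right) (le_inf hx hb)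
  obtain ⟨n, hn⟩ := hunit |h|
  exact eq_zero_of_inf_eq_zero_of_le_nsmul hx (add_nonneg ha hb)
    (inf_add_eq_zero hx ha hb hxa hxb) (inf_le_right.trans hn)

namespace IsComponent

variable {u σ τ : A}

lemma sub_mem_polar (hσ : IsComponent u σ) : u - σ ∈ polar {σ} := by
  rw [mem_polar_singleton, abs_of_nonneg hσ.sub_nonneg, abs_of_nonneg hσ.nonneg, inf_comm]
  exact hσ.1

lemma le_of_mem_polar_polar (hσ : IsComponent u σ) (hτ : IsComponent u τ)
    (hmem : σ ∈ polar (polar {τ})) : σ ≤ τ := by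
  have hdisj : σ ⊓ (u - τ) = 0 := by
    simpa [abs_of_nonneg hσ.nonneg, abs_of_nonneg hτ.sub_nonneg]
      using abs_inf_abs_eq_zero_of_mem_polar hmem hτ.sub_mem_polar
  calc σ = σ ⊓ (τ + (u - τ)) := by
        rw [add_sub_cancel, inf_eq_left.mpr (le_of_sub_nonneg hσ.sub_nonneg)]
    _ ≤ σ ⊓ τ + σ ⊓ (u - τ) := inf_add_le_inf_add_inf hσ.nonneg hτ.nonneg hτ.sub_nonneg
    _ ≤ τ := by rw [hdisj, add_zero]; exact inf_le_right

lemma eq_of_polar_polar_eq (hσ : IsComponent u σ) (hτ : IsComponent u τ)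
    (h : polar (polar {σ}) = polar (polar {τ})) : σ = τ :=
  le_antisymm (hσ.le_of_mem_polar_polar hτ (h ▸ mem_polar_polar_self σ))
    (hτ.le_of_mem_polar_polar hσ (h ▸ mem_polar_polar_self τ))

end IsComponent

end LatticeOrderedGroup

/-- In an abelian ℓ-group with strong unit `v` in which every element decomposes
along every principal polar (as in any projectable Archimedean ℓ-group), each
element `h` determines a unique component `σ` of `v` with `σ^⊥⊥ = h^⊥⊥`. -/
theorem statement12 {H : Type*} [Lattice H] [AddCommGroup H]
    [CovariantClass H H (· + ·) (· ≤ ·)]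
    (v : H) (hv0 : 0 ≤ v) (hv : ∀ g : H, ∃ n : ℕ, 1 ≤ n ∧ g ≤ n • v)
    (hdec : ∀ x g : H, ∃ a ∈ polar (polar {x}), ∃ b ∈ polar {x}, g = a + b)
    (h : H) :
    ∃! σ : H, IsComponent v σ ∧ polar (polar {σ}) = polar (polar {h}) := by
  obtain ⟨a, ha, b, hb, rfl⟩ := hdec h v
  have hab : |a| ⊓ |b| = 0 := abs_inf_abs_eq_zero_of_mem_polar ha hb
  have ha0 : 0 ≤ a := nonneg_of_abs_inf_abs_eq_zero hab hv0
  have hb0 : 0 ≤ b :=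
    nonneg_of_abs_inf_abs_eq_zero (inf_comm |a| |b| ▸ hab) (add_comm a b ▸ hv0)
  have hcomp : IsComponent (a + b) a :=
    isComponent_add_of_inf_eq_zero (by simpa [abs_of_nonneg ha0, abs_of_nonneg hb0] using hab)
  have hpolar : polar {a} = polar {h} := by
    have hunit (g : H) : ∃ n : ℕ, g ≤ n • (a + b) := (hv g).imp fun _ hn ↦ hn.2
    exact (polar_singleton_subset_of_add_mem_polar hunit ha0 hb0 hb).antisymm
      (subset_polar_singleton_of_mem_polar ha)
  refine ⟨a, ⟨hcomp, by rw [hpolar]⟩, fun τ ⟨hτ, hτh⟩ ↦ ?_⟩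
  exact hτ.eq_of_polar_polar_eq hcomp (by rw [hτh, hpolar])
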